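/- Let k be a field that is not algebraically closed, X an affine k-variety, and Z ⊂ X a closed subvariety. If f is a rational function on Z that is regular at every k-point of Z, then there exists a rational function F on X, regular at every k-point of X, such that F|_Z = f. -/

import Mathlib

open MvPolynomial

/-- An algebraic subset of affine `n`-space over `k`: the common zero set of a
family of polynomials. -/
def IsAlgSet {k : Type*} [Field k] {n : ℕ} (V : Set (Fin n → k)) : Prop :=
  ∃ S : Set (MvPolynomial (Fin n) k), V = {x | ∀ p ∈ S, eval x p = 0}

/-- `f` is regular at every point of `A`: at each point of `A` it can be written as
a quotient of polynomials with nonvanishing denominator. -/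
def RegularOn {k : Type*} [Field k] {n : ℕ} (f : (Fin n → k) → k) (A : Set (Fin n → k)) : Prop :=
  ∀ x ∈ A, ∃ p q : MvPolynomial (Fin n) k, eval x q ≠ 0 ∧
    ∀ y ∈ A, eval y q ≠ 0 → f y = eval y p / eval y q

/-! The denominators `q` for which some polynomial `p` satisfies `f * q = p` on `Z` form an
ideal of `k[x₁, …, xₙ]`. It contains the equations of `Z`, and the squares `q_x ^ 2` of the
local denominators of `f` (squaring makes `f * q_x ^ 2 = p_x * q_x` hold on all of `Z`, also
where `q_x` vanishes), so it has no `k`-rational zero. Since `k` is not algebraically closed, the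
homogenization `H(a, b)` of a polynomial without roots vanishes only at the origin of `k²`; folding
the finitely many generators of the ideal through `H` yields one element `q` of the ideal without
`k`-rational zeros, and `F = p / q` is then regular everywhere. -/

namespace Polynomial

variable {K : Type*} [Field K]

lemma eval_homogenize_natDegree_of_eq_zero (p : K[X]) (x : Fin 2 → K) (hx : x 1 = 0) :
    MvPolynomial.eval x (p.homogenize p.natDegree) = p.leadingCoeff * x 0 ^ p.natDegree := by
  rw [homogenize, MvPolynomial.eval_sum, Finset.sum_eq_single (p.natDegree, 0)]
  · simp [MvPolynomial.eval_monomial, Finsupp.prod_fintype, Fin.prod_univ_two]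
  · rintro ⟨i, j⟩ hmem hne
    have hj : j ≠ 0 := by
      rintro rfl
      simp_all
    simp [MvPolynomial.eval_monomial, Finsupp.prod_fintype, Fin.prod_univ_two, hx, hj]
  · simp

lemma eq_zero_of_eval_homogenize_eq_zero {p : K[X]} (hp : ∀ a, p.eval a ≠ 0)
    (hd : 0 < p.natDegree) {x : Fin 2 → K}
    (h : MvPolynomial.eval x (p.homogenize p.natDegree) = 0) : x = 0 := by
  have hp0 : p ≠ 0 := fun h0 => hp 0 (by simp [h0])
  by_cases hx : x 1 = 0
  · rw [eval_homogenize_natDegree_of_eq_zero p x hx] at h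
    have : x 0 = 0 := by simpa [hp0, hd.ne'] using h
    ext i; fin_cases i <;> simp [*]
  · rw [eval_homogenize le_rfl x hx] at h
    exact absurd h (mul_ne_zero (hp _) (pow_ne_zero _ hx))

end Polynomial

namespace MvPolynomial

lemma aeval_mem_of_constantCoeff_eq_zero {R σ A : Type*} [CommRing R] [CommRing A]
    [Algebra R A] {I : Ideal A} {N : MvPolynomial σ R} (hN : constantCoeff N = 0) {g : σ → A}
    (hg : ∀ i, g i ∈ I) : aeval g N ∈ I := by
  rw [← Ideal.Quotient.eq_zero_iff_mem, ← Ideal.Quotient.mkₐ_eq_mk R, comp_aeval_apply]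
  simp [Ideal.Quotient.eq_zero_iff_mem.mpr (hg _), hN]

end MvPolynomial

section

variable {k : Type*} [Field k] {σ : Type*}

lemma exists_anisotropic_binary_form (hk : ¬ IsAlgClosed k) :
    ∃ H : MvPolynomial (Fin 2) k, constantCoeff H = 0 ∧ ∀ x, eval x H = 0 → x = 0 := by
  obtain ⟨p, -, hirr, hp⟩ :
      ∃ p : Polynomial k, p.Monic ∧ Irreducible p ∧ ∀ a, p.eval a ≠ 0 := by
    by_contra! h
    exact hk (IsAlgClosed.of_exists_root k h)
  refine ⟨p.homogenize p.natDegree, ?_,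
    fun x => p.eq_zero_of_eval_homogenize_eq_zero hp hirr.natDegree_pos⟩
  rw [constantCoeff_eq, Polynomial.coeff_homogenize]
  simp [hirr.natDegree_pos.ne]

lemma exists_mem_eval_eq_zero_imp_forall_of_subset (hk : ¬ IsAlgClosed k)
    {I : Ideal (MvPolynomial σ k)} (s : Finset (MvPolynomial σ k))
    (hs : (s : Set (MvPolynomial σ k)) ⊆ I) :
    ∃ u ∈ I, ∀ x, eval x u = 0 → ∀ g ∈ s, eval x g = 0 := by
  classical
  obtain ⟨H, hH0, hH⟩ := exists_anisotropic_binary_form hk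
  induction s using Finset.induction_on with
  | empty => exact ⟨0, I.zero_mem, by simp⟩
  | insert g s _ ih =>
    rw [Finset.coe_insert, Set.insert_subset_iff] at hs
    obtain ⟨u, huI, hu⟩ := ih hs.2
    refine ⟨aeval ![g, u] H, aeval_mem_of_constantCoeff_eq_zero hH0 ?_, fun x hx => ?_⟩
    · intro i; fin_cases i
      exacts [hs.1, huI]
    · have hgu := hH _ (show eval (fun i => eval x (![g, u] i)) H = 0 from
        (comp_aeval_apply (f := ![g, u]) (aeval x) H).symm.trans hx)
      rw [Finset.forall_mem_insert]
      exact ⟨by simpa using congrFun hgu 0, hu x (by simpa using congrFun hgu 1)⟩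

lemma exists_mem_forall_eval_ne_zero [Finite σ] (hk : ¬ IsAlgClosed k)
    (I : Ideal (MvPolynomial σ k)) (hI : ∀ x, ∃ g ∈ I, eval x g ≠ 0) :
    ∃ u ∈ I, ∀ x, eval x u ≠ 0 := by
  obtain ⟨s, rfl⟩ := (isNoetherianRing_iff_ideal_fg _).mp inferInstance I
  obtain ⟨u, huI, hu⟩ := exists_mem_eval_eq_zero_imp_forall_of_subset hk s Ideal.subset_span
  refine ⟨u, huI, fun x hx => ?_⟩
  obtain ⟨g, hg, hgx⟩ := hI x
  exact hgx (Ideal.span_le.mpr (fun g hg => hu x hx g hg) hg : g ∈ RingHom.ker (eval x))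

def denominatorIdeal (Z : Set (σ → k)) (f : (σ → k) → k) :
    Ideal (MvPolynomial σ k) where
  carrier := {q | ∃ p : MvPolynomial σ k, ∀ y ∈ Z, f y * eval y q = eval y p}
  add_mem' := by
    rintro q₁ q₂ ⟨p₁, h₁⟩ ⟨p₂, h₂⟩
    exact ⟨p₁ + p₂, fun y hy => by simp [mul_add, h₁ y hy, h₂ y hy]⟩
  zero_mem' := ⟨0, by simp⟩
  smul_mem' := by
    rintro c q ⟨p, h⟩
    exact ⟨c * p, fun y hy => by simp [← h y hy]; ring⟩

lemma mem_denominatorIdeal_of_forall_eval_eq_zero {Z : Set (σ → k)}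
    {f : (σ → k) → k} {q : MvPolynomial σ k} (hq : ∀ y ∈ Z, eval y q = 0) :
    q ∈ denominatorIdeal Z f :=
  ⟨0, fun y hy => by simp [hq y hy]⟩

lemma sq_mem_denominatorIdeal {Z : Set (σ → k)} {f : (σ → k) → k}
    {p q : MvPolynomial σ k} (hpq : ∀ y ∈ Z, eval y q ≠ 0 → f y = eval y p / eval y q) :
    q ^ 2 ∈ denominatorIdeal Z f := by
  refine ⟨p * q, fun y hy => ?_⟩
  by_cases hq : eval y q = 0
  · simp [hq]
  · rw [hpq y hy hq, map_pow, map_mul]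
    field_simp

lemma exists_mem_denominatorIdeal_eval_ne_zero {n : ℕ} {Z : Set (Fin n → k)}
    (hZ : IsAlgSet Z) {f : (Fin n → k) → k} (hf : RegularOn f Z) (x : Fin n → k) :
    ∃ q ∈ denominatorIdeal Z f, eval x q ≠ 0 := by
  obtain ⟨S, rfl⟩ := hZ
  by_cases hx : ∀ s ∈ S, eval x s = 0
  · obtain ⟨p, q, hqx, hpq⟩ := hf x hx
    exact ⟨q ^ 2, sq_mem_denominatorIdeal hpq, by simpa using hqx⟩
  · push Not at hx
    obtain ⟨s, hs, hsx⟩ := hx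
    exact ⟨s, mem_denominatorIdeal_of_forall_eval_eq_zero fun y hy => hy s hs, hsx⟩

end

theorem stmt19_general {k : Type*} [Field k] (hk : ¬ IsAlgClosed k) (n : ℕ)
    (Xv Z : Set (Fin n → k)) (hZ : IsAlgSet Z)
    (f : (Fin n → k) → k) (hf : RegularOn f Z) :
    ∃ F : (Fin n → k) → k, RegularOn F Xv ∧ ∀ z ∈ Z, F z = f z := by
  obtain ⟨q, ⟨p, hpq⟩, hq⟩ := exists_mem_forall_eval_ne_zero hk (denominatorIdeal Z f)
    (exists_mem_denominatorIdeal_eval_ne_zero hZ hf)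
  exact ⟨fun y => eval y p / eval y q, fun x _ => ⟨p, q, hq x, fun _ _ _ => rfl⟩,
    fun z hz => (eq_div_of_mul_eq (hq z) (hpq z hz)).symm⟩

theorem stmt19 {k : Type*} [Field k] (hk : ¬ IsAlgClosed k) (n : ℕ)
    (Xv Z : Set (Fin n → k)) (hXv : IsAlgSet Xv) (hZ : IsAlgSet Z) (hZX : Z ⊆ Xv)
    (f : (Fin n → k) → k) (hf : RegularOn f Z) :
    ∃ F : (Fin n → k) → k, RegularOn F Xv ∧ ∀ z ∈ Z, F z = f z :=
  stmt19_general hk n Xv Z hZ f hf
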